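/- Any word over a k-symbol alphabet that contains, for every word w of length n over k symbols, either w or its reversal as a contiguous subword, must have length at least (k^n + k^(⌈n/2⌉) + 2n - 2)/2. -/

import Mathlib

/-!
Let `I` be the set of length-`n` infixes of `s`, so `#I ≤ |s| + 1 - n`. Every word of length `n`
lies in `I ∪ reverse I`, and every palindrome of length `n` lies in `I ∩ reverse I`; there are
`k ^ n` words and `k ^ ⌈n/2⌉` palindromes, so inclusion–exclusion gives
`k ^ n + k ^ ⌈n/2⌉ ≤ #(I ∪ reverse I) + #(I ∩ reverse I) = 2 #I ≤ 2 (|s| + 1 - n)`.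
-/

open Finset

theorem Finset.card_union_image_add_card_filter_eq_le {β : Type*} [DecidableEq β]
    (I : Finset β) (f : β → β) :
    #(I ∪ I.image f) + #{x ∈ I | f x = x} ≤ 2 * #I := by
  have hfixed : {x ∈ I | f x = x} ⊆ I ∩ I.image f := fun x hx => by
    obtain ⟨hxI, hfx⟩ := mem_filter.1 hx
    exact mem_inter.2 ⟨hxI, mem_image.2 ⟨x, hxI, hfx⟩⟩
  calc #(I ∪ I.image f) + #{x ∈ I | f x = x}
      ≤ #(I ∪ I.image f) + #(I ∩ I.image f) := by gcongr
    _ = #I + #(I.image f) := card_union_add_card_inter _ _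
    _ ≤ 2 * #I := by have := card_image_le (s := I) (f := f); omega

namespace List

variable {α : Type*}

def infixesOfLength [DecidableEq α] (s : List α) (n : ℕ) : Finset (List α) :=
  (Finset.range (s.length + 1 - n)).image fun i => (s.drop i).take n

theorem card_infixesOfLength_le [DecidableEq α] (s : List α) (n : ℕ) :
    #(s.infixesOfLength n) ≤ s.length + 1 - n :=
  Finset.card_image_le.trans (Finset.card_range _).le

theorem IsInfix.mem_infixesOfLength [DecidableEq α] {w s : List α} {n : ℕ} (h : w <:+: s)
    (hw : w.length = n) : w ∈ s.infixesOfLength n := by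
  subst hw
  obtain ⟨a, b, rfl⟩ := h
  refine Finset.mem_image.2 ⟨a.length, Finset.mem_range.2 ?_, ?_⟩
  · simp only [length_append]
    omega
  · rw [append_assoc, drop_left, take_left]

theorem card_pow_le_card_of_length_eq_mem [Fintype α] {n : ℕ} {J : Finset (List α)}
    (hJ : ∀ w : List α, w.length = n → w ∈ J) :
    Fintype.card α ^ n ≤ #J :=
  calc Fintype.card α ^ n = #(univ : Finset (Fin n → α)) := by simp
    _ ≤ #J := card_le_card_of_injOn ofFn (fun v _ => hJ _ length_ofFn)
        (fun _ _ _ _ h => ofFn_injective h)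

def palindromeOfFn {n : ℕ} (f : Fin ((n + 1) / 2) → α) : List α :=
  ofFn fun i : Fin n => f ⟨min i (n - 1 - i), by omega⟩

theorem length_palindromeOfFn {n : ℕ} (f : Fin ((n + 1) / 2) → α) :
    (palindromeOfFn f).length = n :=
  length_ofFn

theorem reverse_palindromeOfFn {n : ℕ} (f : Fin ((n + 1) / 2) → α) :
    (palindromeOfFn f).reverse = palindromeOfFn f := by
  refine ext_getElem (by simp) fun j _ _ => ?_
  simp only [palindromeOfFn, List.getElem_reverse, List.getElem_ofFn, length_ofFn]
  congr 2
  omega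

theorem palindromeOfFn_injective {n : ℕ} :
    Function.Injective (palindromeOfFn : (Fin ((n + 1) / 2) → α) → List α) := by
  intro f g hfg
  funext j
  have hj : (j : ℕ) < n := by omega
  have hmin : min (j : ℕ) (n - 1 - j) = j := by omega
  simpa [palindromeOfFn, hj, hmin] using congrArg (·[j]?) hfg

theorem card_pow_half_le_card_of_palindrome_mem [Fintype α] {n : ℕ} {J : Finset (List α)}
    (hJ : ∀ w : List α, w.length = n → w.reverse = w → w ∈ J) :
    Fintype.card α ^ ((n + 1) / 2) ≤ #J :=
  calc Fintype.card α ^ ((n + 1) / 2) = #(univ : Finset (Fin ((n + 1) / 2) → α)) := by simp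
    _ ≤ #J := card_le_card_of_injOn palindromeOfFn
        (fun f _ => hJ _ (length_palindromeOfFn f) (reverse_palindromeOfFn f))
        (fun _ _ _ _ h => palindromeOfFn_injective h)

end List

theorem unoriented_deBruijn_lower_bound_general (k n : ℕ) (hk : 0 < k)
    (s : List (Fin k))
    (hs : ∀ w : List (Fin k), w.length = n → (w <:+: s ∨ w.reverse <:+: s)) :
    (k ^ n + k ^ ((n + 1) / 2) + 2 * n - 2) / 2 ≤ s.length := by
  set I := s.infixesOfLength n
  have hcover : ∀ w : List (Fin k), w.length = n → w ∈ I ∨ w.reverse ∈ I := fun w hw => by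
    obtain h | h := hs w hw
    · exact .inl (h.mem_infixesOfLength hw)
    · exact .inr (h.mem_infixesOfLength (w.length_reverse.trans hw))
  have hwords : k ^ n ≤ #(I ∪ I.image List.reverse) := by
    simpa using List.card_pow_le_card_of_length_eq_mem fun w hw =>
      (hcover w hw).elim (mem_union_left _) fun h =>
        mem_union_right _ (mem_image.2 ⟨_, h, w.reverse_reverse⟩)
  have hpalindromes : k ^ ((n + 1) / 2) ≤ #{u ∈ I | u.reverse = u} := by
    simpa using List.card_pow_half_le_card_of_palindrome_mem fun w hw hrev =>
      mem_filter.2 ⟨(hcover w hw).elim id fun h => by rwa [hrev] at h, hrev⟩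
  have hI : #I ≤ s.length + 1 - n := s.card_infixesOfLength_le n
  -- rules out `s.length < n`, where `s.length + 1 - n` truncates to `0`
  have hpos : 0 < k ^ n := pow_pos hk n
  have := I.card_union_image_add_card_filter_eq_le List.reverse
  omega

theorem unoriented_deBruijn_lower_bound (k n : ℕ) (hk : 0 < k) (hn : 0 < n)
    (s : List (Fin k))
    (hs : ∀ w : List (Fin k), w.length = n → (w <:+: s ∨ w.reverse <:+: s)) :
    (k ^ n + k ^ ((n + 1) / 2) + 2 * n - 2) / 2 ≤ s.length :=
  unoriented_deBruijn_lower_bound_general k n hk s hs
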